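/- arXiv:2404.03500 — 3 statements merged into one kernel-verified Lean document; each statement's English description precedes it below -/
import Mathlib

section
/- Let A be an n×r real matrix and B an r×m real matrix. If all entries and all 2×2 minors of A and of B are non-negative (i.e., A and B are TP₂), then all entries and all 2×2 minors of the product AB are non-negative. -/
/-- A real matrix is TP₂ if all entries and all 2×2 minors are non-negative. -/
def IsTP2 {n m : ℕ} (A : Matrix (Fin n) (Fin m) ℝ) : Prop :=
  (∀ i j, 0 ≤ A i j) ∧
  ∀ i₁ i₂ j₁ j₂, i₁ < i₂ → j₁ < j₂ →
    0 ≤ A i₁ j₁ * A i₂ j₂ - A i₁ j₂ * A i₂ j₁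

/-!
Cauchy–Binet for 2×2 minors: summing `minor₂ A i₁ i₂ k l * minor₂ B k l j₁ j₂` over all
ordered pairs `(k, l)` gives twice the minor of `A * B`. Each summand is non-negative when
`A` and `B` are TP₂: for `k < l` both factors are, for `k > l` both change sign, and for
`k = l` both vanish.
-/

namespace Matrix

variable {ι κ ν R : Type*} [CommRing R]

def minor₂ (M : Matrix ι κ R) (i₁ i₂ : ι) (j₁ j₂ : κ) : R :=
  M i₁ j₁ * M i₂ j₂ - M i₁ j₂ * M i₂ j₁

theorem minor₂_swap_cols (M : Matrix ι κ R) (i₁ i₂ : ι) (j₁ j₂ : κ) :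
    M.minor₂ i₁ i₂ j₂ j₁ = -M.minor₂ i₁ i₂ j₁ j₂ := by
  unfold minor₂; ring

theorem minor₂_swap_rows (M : Matrix ι κ R) (i₁ i₂ : ι) (j₁ j₂ : κ) :
    M.minor₂ i₂ i₁ j₁ j₂ = -M.minor₂ i₁ i₂ j₁ j₂ := by
  unfold minor₂; ring

theorem minor₂_self_cols (M : Matrix ι κ R) (i₁ i₂ : ι) (j : κ) :
    M.minor₂ i₁ i₂ j j = 0 := by
  unfold minor₂; ring

theorem two_mul_minor₂_mul [Fintype κ] (A : Matrix ι κ R) (B : Matrix κ ν R)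
    (i₁ i₂ : ι) (j₁ j₂ : ν) :
    2 * (A * B).minor₂ i₁ i₂ j₁ j₂ = ∑ k, ∑ l, A.minor₂ i₁ i₂ k l * B.minor₂ k l j₁ j₂ := by
  have expand : (A * B).minor₂ i₁ i₂ j₁ j₂ = ∑ k, ∑ l, A i₁ k * A i₂ l * B.minor₂ k l j₁ j₂ := by
    simp only [minor₂, mul_apply, Finset.sum_mul_sum, ← Finset.sum_sub_distrib]
    refine Finset.sum_congr rfl fun k _ => Finset.sum_congr rfl fun l _ => ?_
    ring
  have antisymm : ∑ k, ∑ l, A i₁ l * A i₂ k * B.minor₂ k l j₁ j₂ =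
      -∑ k, ∑ l, A i₁ k * A i₂ l * B.minor₂ k l j₁ j₂ := by
    rw [Finset.sum_comm]
    simp only [← Finset.sum_neg_distrib, ← mul_neg, ← minor₂_swap_rows]
  calc 2 * (A * B).minor₂ i₁ i₂ j₁ j₂
      = ∑ k, ∑ l, A i₁ k * A i₂ l * B.minor₂ k l j₁ j₂ -
          ∑ k, ∑ l, A i₁ l * A i₂ k * B.minor₂ k l j₁ j₂ := by
        rw [antisymm, sub_neg_eq_add, expand, two_mul]
    _ = ∑ k, ∑ l, A.minor₂ i₁ i₂ k l * B.minor₂ k l j₁ j₂ := by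
        simp only [← Finset.sum_sub_distrib, ← sub_mul, minor₂]

end Matrix

open Matrix

theorem IsTP2.minor₂_mul_minor₂_nonneg {n r m : ℕ} {A : Matrix (Fin n) (Fin r) ℝ}
    {B : Matrix (Fin r) (Fin m) ℝ} (hA : IsTP2 A) (hB : IsTP2 B) {i₁ i₂ : Fin n}
    {j₁ j₂ : Fin m} (hi : i₁ < i₂) (hj : j₁ < j₂) (k l : Fin r) :
    0 ≤ A.minor₂ i₁ i₂ k l * B.minor₂ k l j₁ j₂ := by
  rcases lt_trichotomy k l with hkl | rfl | hlk
  · exact mul_nonneg (hA.2 _ _ _ _ hi hkl) (hB.2 _ _ _ _ hkl hj)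
  · rw [minor₂_self_cols, zero_mul]
  · rw [← neg_mul_neg, ← minor₂_swap_cols, ← minor₂_swap_rows]
    exact mul_nonneg (hA.2 _ _ _ _ hi hlk) (hB.2 _ _ _ _ hlk hj)

theorem tp2_mul {n r m : ℕ} (A : Matrix (Fin n) (Fin r) ℝ)
    (B : Matrix (Fin r) (Fin m) ℝ) (hA : IsTP2 A) (hB : IsTP2 B) :
    IsTP2 (A * B) := by
  refine ⟨fun i j => ?_, fun i₁ i₂ j₁ j₂ hi hj => ?_⟩
  · rw [mul_apply]
    exact Finset.sum_nonneg fun k _ => mul_nonneg (hA.1 i k) (hB.1 k j)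
  have h2 : 0 ≤ 2 * (A * B).minor₂ i₁ i₂ j₁ j₂ := by
    rw [two_mul_minor₂_mul]
    exact Finset.sum_nonneg fun k _ => Finset.sum_nonneg fun l _ =>
      hA.minor₂_mul_minor₂_nonneg hB hi hj k l
  unfold minor₂ at h2
  linarith
end

section
/- Let A be an n×m real matrix with strictly positive entries. Then every 2×2 minor of A is non-negative if and only if every 2×2 minor formed from two consecutive rows and two consecutive columns is non-negative. -/
/-! Positivity turns a nonnegative 2×2 minor into an inequality between ratios: for rows `u`, `v`
and columns `j ≤ j'`, `v j * u j' ≤ v j' * u j` says `v j / u j ≤ v j' / u j'`. So the minors of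
two consecutive rows are all nonnegative as soon as the consecutive ones are, since a function on
`Fin m` is monotone once it increases at every step. Applying the same fact to two fixed columns
and consecutive rows gives every minor. -/

theorem Fin.monotone_of_le_succ {α : Type*} [Preorder α] {m : ℕ} {f : Fin m → α}
    (h : ∀ k (hk : k + 1 < m), f ⟨k, by omega⟩ ≤ f ⟨k + 1, hk⟩) : Monotone f := by
  cases m with
  | zero => exact fun a => a.elim0
  | succ m => exact Fin.monotone_iff_le_succ.2 fun i => h i (by omega)

theorem Fin.cross_mul_le_of_le_of_consecutive {α : Type*} [Field α] [LinearOrder α]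
    [IsStrictOrderedRing α] {m : ℕ} {u v : Fin m → α} (hu : ∀ j, 0 < u j)
    (h : ∀ k (hk : k + 1 < m), v ⟨k, by omega⟩ * u ⟨k + 1, hk⟩ ≤ v ⟨k + 1, hk⟩ * u ⟨k, by omega⟩)
    {j j' : Fin m} (hjj' : j ≤ j') : v j * u j' ≤ v j' * u j := by
  have hratio : Monotone fun j => v j / u j :=
    Fin.monotone_of_le_succ fun k hk => (div_le_div_iff₀ (hu _) (hu _)).2 (h k hk)
  exact (div_le_div_iff₀ (hu _) (hu _)).1 (hratio hjj')

theorem tp2_iff_consecutive_minors {n m : ℕ} (A : Matrix (Fin n) (Fin m) ℝ)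
    (hpos : ∀ i j, 0 < A i j) :
    (∀ i₁ i₂ : Fin n, ∀ j₁ j₂ : Fin m, i₁ < i₂ → j₁ < j₂ →
        0 ≤ A i₁ j₁ * A i₂ j₂ - A i₁ j₂ * A i₂ j₁) ↔
    (∀ (i j : ℕ) (hi : i + 1 < n) (hj : j + 1 < m),
        0 ≤ A ⟨i, by omega⟩ ⟨j, by omega⟩ * A ⟨i + 1, hi⟩ ⟨j + 1, hj⟩ -
          A ⟨i, by omega⟩ ⟨j + 1, hj⟩ * A ⟨i + 1, hi⟩ ⟨j, by omega⟩) := by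
  refine ⟨fun h i j hi hj => h _ _ _ _ (Fin.mk_lt_mk.2 (by omega)) (Fin.mk_lt_mk.2 (by omega)),
    fun h i₁ i₂ j₁ j₂ hi hj => ?_⟩
  have hconsecutive_rows : ∀ k (hk : k + 1 < n),
      A ⟨k + 1, hk⟩ j₁ * A ⟨k, by omega⟩ j₂ ≤ A ⟨k + 1, hk⟩ j₂ * A ⟨k, by omega⟩ j₁ :=
    fun k hk => Fin.cross_mul_le_of_le_of_consecutive (u := A ⟨k, by omega⟩) (hpos _)
      (fun l hl => by linarith [h k l hk hl]) hj.le
  have := Fin.cross_mul_le_of_le_of_consecutive (u := fun i => A i j₁) (v := fun i => A i j₂)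
    (hpos · j₁) (fun k hk => by linarith [hconsecutive_rows k hk]) hi.le
  linarith
end

section
/- For integers d ≥ 1 and 0 ≤ i, j ≤ d−1, let A(d,i,j) be the number of permutations σ of {1,…,d} with exactly i descents and σ(d) = d−j. Then A(d,i,j) = 0 if and only if (i = 0 and j ≠ 0) or (i = d−1 and j ≠ d−1). -/
/-!
Composing with the reversal `k ↦ d - 1 - k` of values turns descents into ascents, so it
matches the permutations counted by `A(d, i, j)` with those counted by
`A(d, d - 1 - i, d - 1 - j)`. A permutation without descents is the identity, which ends in `d`;
this gives the zeros at `i = 0` and, by the symmetry, at `i = d - 1`. In the remaining cases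
we may assume `j ≤ i`, and the permutation that decreases through its first `i + 1` positions
down to its minimum and then increases can be arranged to end in `d - j`.
-/

/-- The number of descents of a permutation of `Fin d`:
indices `k` with `σ(k) > σ(k+1)`. -/
def descentCount {d : ℕ} (σ : Equiv.Perm (Fin d)) : ℕ :=
  (Finset.univ.filter
    (fun k : Fin d => ∃ l : Fin d, (l : ℕ) = (k : ℕ) + 1 ∧ σ l < σ k)).card

/-- `A d i j` is the number of permutations `σ` of `{1,…,d}` (modeled on `Fin d`
with values shifted down by one) with exactly `i` descents and `σ(d) = d - j`,
i.e. the last value (0-based) satisfies `σ(last) + j = d - 1`.  In particular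
`A d i j = 0` whenever `i ≥ d` or `j ≥ d`. -/
def permCount (d i j : ℕ) : ℕ :=
  (Finset.univ.filter (fun σ : Equiv.Perm (Fin d) =>
    descentCount σ = i ∧
    ∃ k : Fin d, (k : ℕ) = d - 1 ∧ (σ k : ℕ) + j = d - 1)).card

open Finset

lemma descentCount_eq_card_succ_lt_castSucc {n : ℕ} (σ : Equiv.Perm (Fin (n + 1))) :
    descentCount σ = #{m : Fin n | σ m.succ < σ m.castSucc} := by
  rw [descentCount, card_filter, card_filter, Fin.sum_univ_castSucc]
  have hlast : ¬ ∃ l : Fin (n + 1), (l : ℕ) = (Fin.last n : ℕ) + 1 ∧ σ l < σ (Fin.last n) :=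
    fun ⟨l, hl, _⟩ => by simp only [Fin.val_last] at hl; omega
  have hsucc (m : Fin n) : (∃ l : Fin (n + 1), (l : ℕ) = (m.castSucc : ℕ) + 1 ∧
      σ l < σ m.castSucc) ↔ σ m.succ < σ m.castSucc :=
    ⟨fun ⟨l, hl, hlt⟩ => by rwa [show l = m.succ from Fin.ext (by simpa using hl)] at hlt,
     fun h => ⟨m.succ, by simp, h⟩⟩
  simp only [hsucc, hlast, if_false, add_zero]

lemma descentCount_add_descentCount_trans_revPerm {n : ℕ} (σ : Equiv.Perm (Fin (n + 1))) :
    descentCount σ + descentCount (σ.trans Fin.revPerm) = n := by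
  simp only [descentCount_eq_card_succ_lt_castSucc, Equiv.trans_apply, Fin.revPerm_apply, Fin.rev_lt_rev]
  rw [card_filter, card_filter, ← sum_add_distrib]
  have hne (m : Fin n) : σ m.castSucc ≠ σ m.succ :=
    σ.injective.ne (Fin.castSucc_lt_succ (i := m)).ne
  calc ∑ m : Fin n, ((if σ m.succ < σ m.castSucc then 1 else 0) +
        if σ m.castSucc < σ m.succ then 1 else 0)
      = ∑ _m : Fin n, 1 := sum_congr rfl fun m _ => by
        rcases (hne m).lt_or_gt with h | h <;> simp [h, h.not_gt]
    _ = n := by simp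

lemma eq_one_of_descentCount_eq_zero {n : ℕ} {σ : Equiv.Perm (Fin (n + 1))}
    (h : descentCount σ = 0) : σ = 1 := by
  rw [descentCount_eq_card_succ_lt_castSucc, card_eq_zero, filter_eq_empty_iff] at h
  have hmono : StrictMono σ := Fin.strictMono_iff_lt_succ.2 fun m =>
    (not_lt.1 (h (mem_univ m))).lt_of_ne (σ.injective.ne (Fin.castSucc_lt_succ (i := m)).ne)
  exact Equiv.ext fun k => hmono.apply_eq

lemma permCount_succ (n i j : ℕ) :
    permCount (n + 1) i j =
      #{σ : Equiv.Perm (Fin (n + 1)) | descentCount σ = i ∧ (σ (Fin.last n) : ℕ) + j = n} := by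
  refine congrArg card (filter_congr fun σ _ => and_congr_right fun _ => ?_)
  exact ⟨fun ⟨k, hk, hσk⟩ => by rwa [show k = Fin.last n from Fin.ext hk] at hσk,
    fun h => ⟨Fin.last n, rfl, h⟩⟩

lemma permCount_eq_permCount_sub {n i j : ℕ} (hi : i ≤ n) (hj : j ≤ n) :
    permCount (n + 1) i j = permCount (n + 1) (n - i) (n - j) := by
  have hrev (σ : Equiv.Perm (Fin (n + 1))) : (σ.trans Fin.revPerm).trans Fin.revPerm = σ :=
    Equiv.ext fun k => Fin.rev_rev _
  rw [permCount_succ, permCount_succ]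
  refine card_nbij' (·.trans Fin.revPerm) (·.trans Fin.revPerm) ?_ ?_ (fun σ _ => hrev σ)
    (fun σ _ => hrev σ) <;>
  · intro σ
    have hsum := descentCount_add_descentCount_trans_revPerm σ
    have hlast := (σ (Fin.last n)).isLt
    simp only [coe_filter, mem_univ, true_and, Set.mem_ofPred_eq, Equiv.trans_apply,
      Fin.revPerm_apply, Fin.val_rev]
    omega

lemma permCount_zero_eq_zero {n j : ℕ} (hj : j ≠ 0) : permCount (n + 1) 0 j = 0 := by
  rw [permCount_succ, card_eq_zero, filter_eq_empty_iff]
  rintro σ - ⟨hσ, hlast⟩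
  rw [eq_one_of_descentCount_eq_zero hσ] at hlast
  simp only [Equiv.Perm.one_apply, Fin.val_last] at hlast
  omega

/-- Reads `n, n-1, …, n-j+1, i-j, i-j-1, …, 0, i-j+1, i-j+2, …, n-j` on `0, 1, …, n`: it
decreases exactly up to position `i`, where it takes the value `0`. -/
def valleyFun (n i j k : ℕ) : ℕ :=
  if k < j then n - k else if k ≤ i then i - k else k - j

variable {n i j : ℕ}

lemma valleyFun_lt (hi : i ≤ n) {k : ℕ} (hk : k < n + 1) :
    valleyFun n i j k < n + 1 := by
  unfold valleyFun; split_ifs <;> omega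

lemma valleyFun_injOn (hji : j ≤ i) (hi : i ≤ n) :
    Set.InjOn (valleyFun n i j) (Set.Iio (n + 1)) := by
  intro a ha b hb hab
  simp only [Set.mem_Iio] at ha hb
  unfold valleyFun at hab
  split_ifs at hab <;> omega

lemma valleyFun_succ_lt_iff (hji : j ≤ i) (hi : i ≤ n) {k : ℕ} (hk : k < n) :
    valleyFun n i j (k + 1) < valleyFun n i j k ↔ k < i := by
  unfold valleyFun; split_ifs <;> omega

noncomputable def valleyPerm (hji : j ≤ i) (hi : i ≤ n) : Equiv.Perm (Fin (n + 1)) :=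
  Equiv.ofBijective (fun k => ⟨valleyFun n i j k, valleyFun_lt hi k.isLt⟩) <|
    Finite.injective_iff_bijective.1 fun a b hab =>
      Fin.ext (valleyFun_injOn hji hi a.isLt b.isLt (Fin.val_eq_of_eq hab))

lemma descentCount_valleyPerm (hji : j ≤ i) (hi : i ≤ n) :
    descentCount (valleyPerm hji hi) = i := by
  rw [descentCount_eq_card_succ_lt_castSucc]
  calc #{m : Fin n | valleyPerm hji hi m.succ < valleyPerm hji hi m.castSucc}
      = #{m : Fin n | (m : ℕ) < i} := by
        congr 1; ext m
        simp only [mem_filter, mem_univ, true_and, Fin.lt_def]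
        exact valleyFun_succ_lt_iff hji hi m.isLt
    _ = i := by rw [Fin.card_filter_val_lt]; omega

lemma valleyPerm_last (hji : j ≤ i) (hi : i ≤ n) (hlast : i < n ∨ j = n) :
    (valleyPerm hji hi (Fin.last n) : ℕ) + j = n := by
  change valleyFun n i j n + j = n
  unfold valleyFun; split_ifs <;> omega

lemma permCount_ne_zero (hji : j ≤ i) (hi : i ≤ n) (hlast : i < n ∨ j = n) :
    permCount (n + 1) i j ≠ 0 := by
  rw [permCount_succ]
  exact card_ne_zero_of_mem <| mem_filter.2
    ⟨mem_univ _, descentCount_valleyPerm hji hi, valleyPerm_last hji hi hlast⟩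

theorem permCount_eq_zero_iff (d i j : ℕ) (hd : 1 ≤ d)
    (hi : i ≤ d - 1) (hj : j ≤ d - 1) :
    permCount d i j = 0 ↔ (i = 0 ∧ j ≠ 0) ∨ (i = d - 1 ∧ j ≠ d - 1) := by
  obtain ⟨n, rfl⟩ : ∃ n, d = n + 1 := ⟨d - 1, by omega⟩
  rw [Nat.add_sub_cancel] at hi hj ⊢
  constructor
  · intro h
    by_contra hc
    rcases le_total j i with hji | hij
    · exact permCount_ne_zero hji hi (by omega) h
    · rw [permCount_eq_permCount_sub hi hj] at h
      exact permCount_ne_zero (by omega) (by omega) (by omega) h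
  · rintro (⟨rfl, hj0⟩ | ⟨rfl, hjn⟩)
    · exact permCount_zero_eq_zero hj0
    · rw [permCount_eq_permCount_sub le_rfl hj, Nat.sub_self]
      exact permCount_zero_eq_zero (by omega)
end
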